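/- The path-shaped monotone graph 2-DNF ψ_n = (x_0 ∧ x_1) ∨ (x_1 ∧ x_2) ∨ ⋯ ∨ (x_{n−1} ∧ x_n) is evasive when n is not divisible by 3: every decision tree computing ψ_n has depth n+1. -/

import Mathlib

/-- A decision tree: internal nodes query a variable and branch on its Boolean
value; leaves output a Boolean. -/
inductive DTree (ι : Type) where
  | leaf : Bool → DTree ι
  | node : ι → DTree ι → DTree ι → DTree ι

namespace DTree

variable {ι : Type}

/-- Evaluate a decision tree on an assignment. -/
def eval : DTree ι → (ι → Bool) → Bool
  | .leaf b, _ => b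
  | .node i t f, v => if v i then t.eval v else f.eval v

/-- Depth: maximal number of queries on a root-to-leaf path. -/
def depth : DTree ι → ℕ
  | .leaf _ => 0
  | .node _ t f => 1 + max t.depth f.depth

/-- A tree computes a Boolean function if it agrees with it on all inputs. -/
def Computes (T : DTree ι) (f : (ι → Bool) → Bool) : Prop :=
  ∀ v, T.eval v = f v

variable [DecidableEq ι]

def restrict : DTree ι → ι → Bool → DTree ι
  | .leaf b, _, _ => .leaf b
  | .node j t f, i, b =>
    if j = i then (if b then restrict t i b else restrict f i b)
    else .node j (restrict t i b) (restrict f i b)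

theorem eval_restrict (T : DTree ι) (i : ι) (b : Bool) (v : ι → Bool) :
    (T.restrict i b).eval v = T.eval (Function.update v i b) := by
  induction T with
  | leaf c => rfl
  | node j t f iht ihf =>
    by_cases hj : j = i
    · subst hj
      cases b <;> simp [restrict, eval, iht, ihf, Function.update_self]
    · simp [restrict, hj, eval, iht, ihf, Function.update_of_ne hj]

theorem depth_restrict (T : DTree ι) (i : ι) (b : Bool) :
    (T.restrict i b).depth ≤ T.depth := by
  induction T with
  | leaf c => simp [restrict, depth]
  | node j t f iht ihf =>
    by_cases hj : j = i
    · subst hj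
      cases b <;> simp only [restrict, if_pos rfl, Bool.false_eq_true, if_false, if_true, depth] <;> omega
    · simp only [restrict, if_neg hj, depth]; omega

end DTree

/-- Decision-tree depth of a Boolean function: minimum depth over all decision
trees computing it. -/
noncomputable def Ddepth {ι : Type} (f : (ι → Bool) → Bool) : ℕ :=
  sInf {d | ∃ T : DTree ι, T.Computes f ∧ T.depth = d}

/-- The path-shaped monotone graph 2-DNF
`ψₙ = (x₀ ∧ x₁) ∨ (x₁ ∧ x₂) ∨ ⋯ ∨ (x_{n-1} ∧ xₙ)` on `n + 1` variables. -/
def pathDNF (n : ℕ) (v : Fin (n + 1) → Bool) : Bool :=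
  decide (∃ i : Fin n, v i.castSucc = true ∧ v i.succ = true)

open Finset in
theorem half_card {ι : Type} [DecidableEq ι] [Fintype ι] (S : DTree ι) (i : ι)
    (hS : ∀ v c, S.eval (Function.update v i c) = S.eval v) (c : Bool) :
    (univ.filter fun v => S.eval v = true).card
      = 2 * (univ.filter fun v => v i = c ∧ S.eval v = true).card := by
  classical
  have hsplit :
      ((univ.filter fun v => S.eval v = true).filter (fun v => v i = c)).card
        + ((univ.filter fun v => S.eval v = true).filter (fun v => ¬ v i = c)).card
        = (univ.filter fun v => S.eval v = true).card :=
    Finset.card_filter_add_card_filter_not _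
  have hbij :
      ((univ.filter fun v => S.eval v = true).filter (fun v => ¬ v i = c)).card
        = ((univ.filter fun v => S.eval v = true).filter (fun v => v i = c)).card := by
    refine Finset.card_nbij' (fun v => Function.update v i c)
        (fun v => Function.update v i (!c)) ?_ ?_ ?_ ?_
    · intro v hv
      simp only [Finset.mem_coe, Finset.mem_filter, Finset.mem_univ, true_and] at hv ⊢
      exact ⟨by rw [hS]; exact hv.1, Function.update_self _ _ _⟩
    · intro v hv
      simp only [Finset.mem_coe, Finset.mem_filter, Finset.mem_univ, true_and] at hv ⊢
      refine ⟨by rw [hS]; exact hv.1, ?_⟩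
      rw [Function.update_self]
      cases c <;> simp
    · intro v hv
      simp only [Finset.mem_coe, Finset.mem_filter, Finset.mem_univ, true_and] at hv
      have h2 : v i = !c := by cases hc : v i <;> cases c <;> simp_all
      show Function.update (Function.update v i c) i (!c) = v
      rw [Function.update_idem, ← h2, Function.update_eq_self]
    · intro v hv
      simp only [Finset.mem_coe, Finset.mem_filter, Finset.mem_univ, true_and] at hv
      show Function.update (Function.update v i (!c)) i c = v
      rw [Function.update_idem, ← hv.2, Function.update_eq_self]
  have hcomm : ∀ (p : (ι → Bool) → Prop) [DecidablePred p],
      ((univ.filter fun v => S.eval v = true).filter p)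
        = (univ.filter fun v => p v ∧ S.eval v = true) := by
    intro p _
    ext v; simp [and_comm]
  rw [← hsplit, hbij, hcomm]
  ring

open Finset in
theorem key_dvd {ι : Type} [DecidableEq ι] [Fintype ι] :
    ∀ (d : ℕ) (T : DTree ι), T.depth ≤ d → d ≤ Fintype.card ι →
      2 ^ (Fintype.card ι - d) ∣ (univ.filter fun v => T.eval v = true).card := by
  intro d
  induction d with
  | zero =>
    intro T hT _
    cases T with
    | leaf b =>
      cases b
      · simp [DTree.eval]
      · have : (univ.filter fun v : ι → Bool => (DTree.leaf true).eval v = true) = univ := by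
          simp [DTree.eval]
        rw [this, card_univ, Fintype.card_fun, Fintype.card_bool, Nat.sub_zero]
    | node i t f => simp [DTree.depth] at hT
  | succ d ih =>
    intro T hT hN
    cases T with
    | leaf b =>
      cases b
      · simp [DTree.eval]
      · have : (univ.filter fun v : ι → Bool => (DTree.leaf true).eval v = true) = univ := by
          simp [DTree.eval]
        rw [this, card_univ, Fintype.card_fun, Fintype.card_bool]
        exact pow_dvd_pow 2 (Nat.sub_le _ _)
    | node i t f =>
      have hdt : t.depth ≤ d := by simp [DTree.depth] at hT; omega
      have hdf : f.depth ≤ d := by simp [DTree.depth] at hT; omega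
      set A := univ.filter fun v : ι → Bool => v i = true ∧ (t.restrict i true).eval v = true
        with hA
      set B := univ.filter fun v : ι → Bool => v i = false ∧ (f.restrict i false).eval v = true
        with hB
      have hinv : ∀ (S : DTree ι) (b : Bool) (v : ι → Bool) (c : Bool),
          (S.restrict i b).eval (Function.update v i c) = (S.restrict i b).eval v := by
        intro S b v c
        rw [DTree.eval_restrict, DTree.eval_restrict, Function.update_idem]
      have hsplit : (univ.filter fun v => (DTree.node i t f).eval v = true) = A ∪ B := by
        ext v
        by_cases h : v i = true
        · have hupd : Function.update v i true = v := by rw [← h]; exact Function.update_eq_self i v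
          simp [DTree.eval, h, hA, hB, DTree.eval_restrict, hupd]
        · have h' : v i = false := by cases hv : v i <;> simp_all
          have hupd : Function.update v i false = v := by
            rw [← h']; exact Function.update_eq_self i v
          simp [DTree.eval, h', hA, hB, DTree.eval_restrict, hupd]
      have hdisj : Disjoint A B := by
        rw [Finset.disjoint_left]
        intro v hvA hvB
        simp [hA, hB] at hvA hvB
        simp [hvA.1] at hvB
      have hNd : Fintype.card ι - d = (Fintype.card ι - (d + 1)) + 1 := by omega
      have dvdA : 2 ^ (Fintype.card ι - (d + 1)) ∣ A.card := by
        have h1 := ih (t.restrict i true) (le_trans (DTree.depth_restrict _ _ _) hdt) (by omega)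
        rw [half_card (t.restrict i true) i (hinv t true) true, ← hA, hNd, pow_succ] at h1
        rw [mul_comm] at h1
        exact (mul_dvd_mul_iff_left (a := (2:ℕ)) (by norm_num)).mp h1
      have dvdB : 2 ^ (Fintype.card ι - (d + 1)) ∣ B.card := by
        have h1 := ih (f.restrict i false) (le_trans (DTree.depth_restrict _ _ _) hdf) (by omega)
        rw [half_card (f.restrict i false) i (hinv f false) false, ← hB, hNd, pow_succ] at h1
        rw [mul_comm] at h1
        exact (mul_dvd_mul_iff_left (a := (2:ℕ)) (by norm_num)).mp h1
      rw [hsplit, Finset.card_union_of_disjoint hdisj]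
      exact dvd_add dvdA dvdB


theorem pathDNF_cons (m : ℕ) (b : Bool) (w : Fin (m + 1) → Bool) :
    pathDNF (m + 1) (Fin.cons b w) = ((b && w 0) || pathDNF m w) := by
  simp only [pathDNF, Bool.or_eq_true, Bool.and_eq_true, decide_eq_true_eq]
  rw [show ((b && w 0) || decide (∃ i : Fin m, w i.castSucc = true ∧ w i.succ = true))
      = decide ((b = true ∧ w 0 = true) ∨ ∃ i : Fin m, w i.castSucc = true ∧ w i.succ = true) by
    simp]
  congr 1
  apply propext
  constructor
  · rintro ⟨i, h1, h2⟩
    induction i using Fin.cases with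
    | zero =>
      left
      constructor
      · simpa using h1
      · have : (Fin.succ (0 : Fin (m+1))) = (Fin.succ (0:Fin (m+1)) : Fin (m+2)) := rfl
        rw [show (Fin.succ (0 : Fin (m+1))) = Fin.succ 0 from rfl] at h2
        simpa [Fin.cons_succ] using h2
    | succ j =>
      right
      refine ⟨j, ?_, ?_⟩
      · rw [show (Fin.castSucc (Fin.succ j)) = Fin.succ (Fin.castSucc j) from rfl] at h1
        simpa [Fin.cons_succ] using h1
      · rw [show (Fin.succ (Fin.succ j)) = Fin.succ (Fin.succ j) from rfl] at h2
        simpa [Fin.cons_succ] using h2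
  · rintro (⟨hb, h0⟩ | ⟨j, h1, h2⟩)
    · exact ⟨0, by simpa using hb, by simpa [Fin.cons_succ] using h0⟩
    · refine ⟨j.succ, ?_, ?_⟩
      · rw [show (Fin.castSucc (Fin.succ j)) = Fin.succ (Fin.castSucc j) from rfl]
        simpa [Fin.cons_succ] using h1
      · rw [show (Fin.succ (Fin.succ j)) = Fin.succ (Fin.succ j) from rfl]
        simpa [Fin.cons_succ] using h2

open Finset in
def gcount (m : ℕ) : ℕ :=
  (univ.filter fun v : Fin (m + 1) → Bool => pathDNF m v = false).card

theorem gcount_zero : gcount 0 = 2 := by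
  classical
  unfold gcount
  rw [Finset.filter_true_of_mem, Finset.card_univ]
  · simp
  · intro v _
    simp [pathDNF]

theorem gcount_one : gcount 1 = 3 := by decide

open Finset in
theorem gcount_rec (m : ℕ) : gcount (m + 2) = gcount (m + 1) + gcount m := by
  classical
  have hG : Function.Injective
      (fun u : Fin (m + 1) → Bool => (Fin.cons true (Fin.cons false u) : Fin (m + 3) → Bool)) := by
    intro u1 u2 h
    have h1 := Fin.cons_right_injective (α := fun _ : Fin (m + 3) => Bool) true h
    exact Fin.cons_right_injective (α := fun _ : Fin (m + 2) => Bool) false h1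
  have him : (univ.filter fun v : Fin (m + 3) → Bool => pathDNF (m + 2) v = false)
      = ((univ.filter fun w : Fin (m + 2) → Bool => pathDNF (m + 1) w = false).image
          ((fun w : Fin (m + 2) → Bool => (Fin.cons false w : Fin (m + 3) → Bool))))
        ∪ ((univ.filter fun u : Fin (m + 1) → Bool => pathDNF m u = false).image
          (fun u : Fin (m + 1) → Bool => (Fin.cons true (Fin.cons false u) : Fin (m + 3) → Bool))) := by
    ext v
    simp only [mem_filter, mem_univ, true_and, mem_union, mem_image]
    constructor
    · intro hv
      rw [← Fin.cons_self_tail v, pathDNF_cons] at hv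
      cases h0 : v 0
      · left
        refine ⟨Fin.tail v, ?_, ?_⟩
        · rw [h0] at hv; simpa using hv
        · rw [← h0]; exact Fin.cons_self_tail v
      · right
        rw [h0] at hv
        simp only [Bool.true_and, Bool.or_eq_false_iff] at hv
        obtain ⟨h1, h2⟩ := hv
        rw [← Fin.cons_self_tail (Fin.tail v), pathDNF_cons, h1] at h2
        simp only [Bool.false_and, Bool.false_or] at h2
        refine ⟨Fin.tail (Fin.tail v), h2, ?_⟩
        have : Fin.cons false (Fin.tail (Fin.tail v)) = Fin.tail v := by
          rw [← h1]; exact Fin.cons_self_tail _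
        rw [this, ← h0]; exact Fin.cons_self_tail v
    · rintro (⟨w, hw, rfl⟩ | ⟨u, hu, rfl⟩)
      · rw [pathDNF_cons, hw]; simp
      · rw [pathDNF_cons, pathDNF_cons, hu]
        simp [Fin.cons_zero]
  have hdisj : Disjoint
      ((univ.filter fun w : Fin (m + 2) → Bool => pathDNF (m + 1) w = false).image
        ((fun w : Fin (m + 2) → Bool => (Fin.cons false w : Fin (m + 3) → Bool))))
      ((univ.filter fun u : Fin (m + 1) → Bool => pathDNF m u = false).image
        (fun u : Fin (m + 1) → Bool => (Fin.cons true (Fin.cons false u) : Fin (m + 3) → Bool))) := by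
    rw [Finset.disjoint_left]
    rintro v hv1 hv2
    simp only [mem_image] at hv1 hv2
    obtain ⟨w, _, rfl⟩ := hv1
    obtain ⟨u, _, h⟩ := hv2
    have := congrArg (fun x => x 0) h
    simp at this
  unfold gcount
  rw [him, Finset.card_union_of_disjoint hdisj,
    Finset.card_image_of_injective _
      (Fin.cons_right_injective (α := fun _ : Fin (m + 3) => Bool) false),
    Finset.card_image_of_injective _ hG]

theorem gcount_mod (m : ℕ) : gcount (m + 3) % 2 = gcount m % 2 := by
  have h1 : gcount (m + 3) = gcount (m + 2) + gcount (m + 1) := gcount_rec (m + 1)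
  have h2 := gcount_rec m
  omega

theorem gcount_odd : ∀ m, ¬ 3 ∣ m → gcount m % 2 = 1 := by
  intro m
  induction m using Nat.strong_induction_on with
  | _ m ih =>
    intro hm
    match m, hm with
    | 0, hm => exact absurd ⟨0, rfl⟩ hm
    | 1, _ => rw [gcount_one]
    | 2, _ => rw [gcount_rec 0, gcount_one, gcount_zero]
    | (k + 3), hm =>
      rw [gcount_mod]
      exact ih k (by omega) (by omega)


open Finset

/-- If `n ≥ 1` and `3 ∤ n`, the path DNF `ψₙ` is evasive: every decision tree
computing it has depth at least `n + 1`. -/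
theorem pathDNF_evasive (n : ℕ) (hn : 1 ≤ n) (hdvd : ¬ 3 ∣ n)
    (T : DTree (Fin (n + 1))) (hT : T.Computes (pathDNF n)) :
    n + 1 ≤ T.depth := by
  by_contra hlt
  push_neg at hlt
  have hd : T.depth ≤ n := by omega
  have hcard : Fintype.card (Fin (n + 1)) = n + 1 := Fintype.card_fin _
  have hdvd2 := key_dvd n T hd (by omega)
  rw [hcard] at hdvd2
  have h21 : n + 1 - n = 1 := by omega
  rw [h21, pow_one] at hdvd2
  have hfilter : (univ.filter fun v => T.eval v = true)
      = (univ.filter fun v : Fin (n + 1) → Bool => pathDNF n v = true) := by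
    ext v; simp [hT v]
  rw [hfilter] at hdvd2
  have hsum : (univ.filter fun v : Fin (n + 1) → Bool => pathDNF n v = true).card + gcount n
      = 2 ^ (n + 1) := by
    unfold gcount
    have := Finset.card_filter_add_card_filter_not
      (s := (univ : Finset (Fin (n + 1) → Bool))) (p := fun v => pathDNF n v = true)
    rw [Finset.card_univ, Fintype.card_fun, Fintype.card_bool, Fintype.card_fin] at this
    rw [← this]
    have hco : (univ.filter fun v : Fin (n + 1) → Bool => pathDNF n v = false)
        = (univ.filter fun v : Fin (n + 1) → Bool => ¬ pathDNF n v = true) := by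
      ext v; simp
    rw [hco]
  have hodd := gcount_odd n hdvd
  have hpow : 2 ∣ 2 ^ (n + 1) := dvd_pow_self 2 (by omega)
  omega
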